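/- arXiv:0807.4250 — 3 statements merged into one kernel-verified Lean document; each statement's English description precedes it below -/
import Mathlib

section
/- Let X be an operator system with a Banach space predual X_♯ such that X⁺ is weak* closed and the involution on X is weak* continuous. Then the cone X_♯⁺ of normal positive functionals on X is weak* dense in the cone X^♯⁺ of all positive functionals on X (in the σ(X^♯, X) topology). -/
/-!
Separating a positive functional `ρ₀` from the closed convex cone of normal positive functionals
gives `f ∈ X` with `Re ρ₀ f < 0 ≤ Re f p` for every positive `p` of the predual. Positive
functionals are hermitian (the unit writes every self-adjoint element as a difference of positive
ones), so `Re ρ f` only depends on the self-adjoint element `f + f*`, which is therefore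
nonnegative on the positive part of the predual. A second separation, in `σ(X, X_♯)`, shows that
such a self-adjoint element lies in the weak*-closed cone `X⁺`: the weak*-continuous involution has
a preadjoint `p ↦ p*` on `X_♯`, and the separating point can be replaced by its self-adjoint part
`p + p*`. Hence `ρ₀ (f + f*) ≥ 0`, a contradiction.
-/

open NormedSpace RCLike ComplexConjugate
open scoped ComplexOrder

theorem ConvexCone.exists_re_neg_of_notMem_closure {𝕜 E : Type*} [RCLike 𝕜]
    [TopologicalSpace E] [AddCommGroup E] [IsTopologicalAddGroup E] [Module ℝ E]
    [LocallyConvexSpace ℝ E] [Module 𝕜 E] [IsScalarTower ℝ 𝕜 E] [ContinuousSMul 𝕜 E]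
    (C : ConvexCone ℝ E) (hC : C.Pointed) {x₀ : E} (hx₀ : x₀ ∉ closure (C : Set E)) :
    ∃ f : StrongDual 𝕜 E, re (f x₀) < 0 ∧ ∀ x ∈ C, 0 ≤ re (f x) := by
  have : ContinuousSMul ℝ E := IsScalarTower.continuousSMul 𝕜
  obtain ⟨f, u, hfx₀, hf⟩ :=
    geometric_hahn_banach_point_closed (𝕜 := 𝕜) C.convex.closure isClosed_closure hx₀
  have hu : u < 0 := by simpa [map_zero] using hf 0 (subset_closure hC)
  refine ⟨f, hfx₀.trans hu, fun x hx => ?_⟩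
  by_contra! hfx
  have := hf _ (subset_closure (C.smul_mem (div_pos_of_neg_of_neg hu hfx) hx))
  rw [f.map_smul_of_tower, smul_re, div_mul_cancel₀ _ hfx.ne] at this
  exact this.false

namespace WeakDual

variable {𝕜 E : Type*} [RCLike 𝕜] [NormedAddCommGroup E] [NormedSpace 𝕜 E]

instance : IsScalarTower ℝ 𝕜 (WeakDual 𝕜 E) :=
  inferInstanceAs (IsScalarTower ℝ 𝕜 (StrongDual 𝕜 E))

instance : LocallyConvexSpace ℝ (WeakDual 𝕜 E) := WeakBilin.locallyConvexSpace

theorem exists_eq_eval (F : StrongDual 𝕜 (WeakDual 𝕜 E)) :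
    ∃ y : E, ∀ x : WeakDual 𝕜 E, F x = x y := by
  obtain ⟨y, rfl⟩ := LinearMap.dualEmbedding_surjective (topDualPairing 𝕜 E) F
  exact ⟨y, fun _ => rfl⟩

theorem exists_re_neg_of_notMem_closure (C : ConvexCone ℝ (WeakDual 𝕜 E)) (hC : C.Pointed)
    {x₀ : WeakDual 𝕜 E} (hx₀ : x₀ ∉ closure (C : Set (WeakDual 𝕜 E))) :
    ∃ y : E, re (x₀ y) < 0 ∧ ∀ x ∈ C, 0 ≤ re (x y) := by
  obtain ⟨F, hFx₀, hF⟩ :=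
    ConvexCone.exists_re_neg_of_notMem_closure (𝕜 := 𝕜) (E := WeakDual 𝕜 E) C hC hx₀
  obtain ⟨y, hy⟩ := exists_eq_eval F
  exact ⟨y, hy x₀ ▸ hFx₀, fun x hx => hy x ▸ hF x hx⟩

theorem exists_apply_eq_conj_apply (σ : WeakDual 𝕜 E →L⋆[𝕜] WeakDual 𝕜 E) (p : E) :
    ∃ q : E, ∀ φ : WeakDual 𝕜 E, φ q = conj (σ φ p) := by
  let F : StrongDual 𝕜 (WeakDual 𝕜 E) :=
    { toFun := fun φ => conj (σ φ p)
      map_add' := fun φ ψ => by rw [map_add]; exact map_add (starRingEnd 𝕜) _ _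
      map_smul' := fun c φ => by
        change conj (σ (c • φ) p) = c * conj (σ φ p)
        rw [map_smulₛₗ]
        change conj (conj c * σ φ p) = _
        rw [map_mul, conj_conj]
      cont := continuous_star.comp ((eval_continuous p).comp σ.continuous) }
  obtain ⟨q, hq⟩ := exists_eq_eval F
  exact ⟨q, fun φ => (hq φ).symm⟩

theorem mem_of_forall_re_apply_nonneg {E : Type*} [NormedAddCommGroup E] [NormedSpace ℂ E]
    {K : ConvexCone ℝ (WeakDual ℂ E)} (hK : K.Pointed)
    (hK_closed : IsClosed (K : Set (WeakDual ℂ E))) (σ : WeakDual ℂ E →L⋆[ℂ] WeakDual ℂ E)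
    (hσK : ∀ φ ∈ K, σ φ = φ) {ψ : WeakDual ℂ E} (hψ : σ ψ = ψ)
    (h : ∀ p : E, (∀ φ ∈ K, 0 ≤ φ p) → 0 ≤ (ψ p).re) : ψ ∈ K := by
  by_contra hψK
  obtain ⟨p, hψp, hp⟩ :=
    exists_re_neg_of_notMem_closure K hK (x₀ := ψ) (by rwa [hK_closed.closure_eq])
  obtain ⟨q, hq⟩ := exists_apply_eq_conj_apply σ p
  -- `q` is `p*` for the preadjoint of `σ`, so `p + q` is a self-adjoint point of the predual.
  have hsymm : ∀ φ : WeakDual ℂ E, σ φ = φ → φ (p + q) = (2 * (φ p).re : ℝ) := by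
    intro φ hφ
    rw [map_add, hq, hφ, Complex.add_conj]
  have := h (p + q) fun φ hφ => by
    rw [hsymm φ (hσK φ hφ)]
    exact Complex.zero_le_real.2 (mul_nonneg zero_le_two (hp φ hφ))
  rw [hsymm ψ hψ, Complex.ofReal_re] at this
  rw [RCLike.re_to_complex] at hψp
  linarith

end WeakDual

section OperatorSystem

variable {X A : Type*} [AddCommGroup X] [Module ℂ X]

section Star

variable [AddCommMonoid A] [Module ℂ A] [StarAddMonoid A]

theorem isSelfAdjoint_add_of_eq_star {j : X →ₗ[ℂ] A} {x y : X} (hxy : j y = star (j x)) :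
    IsSelfAdjoint (j (x + y)) := by
  rw [map_add, hxy]
  exact IsSelfAdjoint.add_star_self _

def starLinearOfInjective [StarModule ℂ A] (j : X →ₗ[ℂ] A) (hj : Function.Injective j)
    (σ : X → X) (hσ : ∀ x, j (σ x) = star (j x)) : X →ₗ⋆[ℂ] X where
  toFun := σ
  map_add' x y := hj <| by simp [hσ]
  map_smul' c x := hj <| by simp [hσ]

end Star

variable [CStarAlgebra A] [PartialOrder A] [StarOrderedRing A] (j : X →ₗ[ℂ] A)

def positiveCone : ConvexCone ℝ X where
  carrier := {x | 0 ≤ j x}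
  smul_mem' t ht x hx := by
    simp only [Set.mem_ofPred_eq, j.map_smul_of_tower] at hx ⊢
    exact smul_nonneg ht.le hx
  add_mem' x hx y hy := by
    simp only [Set.mem_ofPred_eq, map_add] at hx hy ⊢
    exact add_nonneg hx hy

theorem positiveCone_pointed : (positiveCone j).Pointed := by
  simp [ConvexCone.Pointed, positiveCone]

variable {j} {e : X}

theorem exists_nonneg_sub_nonneg_of_isSelfAdjoint (he : j e = 1) {x : X}
    (hx : IsSelfAdjoint (j x)) : ∃ x₁ x₂, 0 ≤ j x₁ ∧ 0 ≤ j x₂ ∧ x = x₁ - x₂ := by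
  refine ⟨‖j x‖ • e + x, ‖j x‖ • e, ?_, ?_, by abel⟩
  · rw [map_add, j.map_smul_of_tower, he, ← Algebra.algebraMap_eq_smul_one,
      ← neg_le_iff_add_nonneg']
    exact hx.neg_algebraMap_norm_le_self
  · rw [j.map_smul_of_tower, he, ← Algebra.algebraMap_eq_smul_one]
    exact algebraMap_nonneg A (norm_nonneg _)

variable {F : Type*} [FunLike F X ℂ] [LinearMapClass F ℂ X ℂ]

theorem im_eq_zero_of_isSelfAdjoint (he : j e = 1) {ρ : F} (hρ : ∀ x, 0 ≤ j x → 0 ≤ ρ x)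
    {x : X} (hx : IsSelfAdjoint (j x)) : (ρ x).im = 0 := by
  obtain ⟨x₁, x₂, hx₁, hx₂, rfl⟩ := exists_nonneg_sub_nonneg_of_isSelfAdjoint he hx
  rw [map_sub, Complex.sub_im, (Complex.nonneg_iff.1 (hρ x₁ hx₁)).2.symm,
    (Complex.nonneg_iff.1 (hρ x₂ hx₂)).2.symm, sub_zero]

theorem apply_add_eq_two_mul_re (he : j e = 1) {ρ : F} (hρ : ∀ x, 0 ≤ j x → 0 ≤ ρ x)
    {x y : X} (hxy : j y = star (j x)) : ρ (x + y) = (2 * (ρ x).re : ℝ) := by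
  have hre : (ρ (x + y)).im = 0 :=
    im_eq_zero_of_isSelfAdjoint he hρ (isSelfAdjoint_add_of_eq_star hxy)
  have him : (ρ (Complex.I • (x - y))).im = 0 := by
    refine im_eq_zero_of_isSelfAdjoint he hρ ?_
    rw [IsSelfAdjoint, map_smul, map_sub, hxy, star_smul, star_sub, star_star, Complex.star_def,
      Complex.conj_I, neg_smul, ← smul_neg, neg_sub]
  rw [map_add] at hre ⊢
  rw [map_smul, map_sub, smul_eq_mul] at him
  apply Complex.ext <;> simp only [Complex.add_re, Complex.add_im, Complex.mul_im, Complex.I_re,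
    Complex.I_im, Complex.sub_re, Complex.ofReal_re, Complex.ofReal_im, zero_mul, one_mul,
    zero_add] at * <;> linarith

end OperatorSystem

section Normal

variable {P A : Type*} [NormedAddCommGroup P] [NormedSpace ℂ P]
  [AddCommMonoid A] [Module ℂ A] [LE A]

def normalPositiveCone (j : StrongDual ℂ P →ₗ[ℂ] A) :
    ConvexCone ℝ (WeakDual ℂ (StrongDual ℂ P)) where
  carrier :=
    {ρ | ∃ p : P, (∀ g : StrongDual ℂ P, 0 ≤ j g → 0 ≤ g p) ∧ ∀ f : StrongDual ℂ P, ρ f = f p}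
  smul_mem' t ht ρ := by
    rintro ⟨p, hp, hρ⟩
    refine ⟨(t : ℂ) • p, fun g hg => ?_, fun f => ?_⟩
    · rw [map_smul]
      exact smul_nonneg (Complex.zero_le_real.2 ht.le) (hp g hg)
    · change t • ρ f = _
      rw [hρ, map_smul, Complex.real_smul, smul_eq_mul]
  add_mem' ρ₁ := by
    rintro ⟨p₁, hp₁, hρ₁⟩ ρ₂ ⟨p₂, hp₂, hρ₂⟩
    refine ⟨p₁ + p₂, fun g hg => ?_, fun f => ?_⟩
    · rw [map_add]
      exact add_nonneg (hp₁ g hg) (hp₂ g hg)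
    · change ρ₁ f + ρ₂ f = _
      rw [hρ₁, hρ₂, map_add]

theorem normalPositiveCone_pointed (j : StrongDual ℂ P →ₗ[ℂ] A) :
    (normalPositiveCone j).Pointed :=
  ⟨0, fun _ _ => by rw [map_zero], fun f => by rw [map_zero]; rfl⟩

end Normal

/-- Let `X` be an operator system (realized as the dual of a Banach
space `P` via a unital star-closed linear isometry `j` into a unital C*-algebra `A`)
such that `X⁺` is weak* closed and the involution on `X` is weak* continuous.  Then
the cone `X_♯⁺` of normal positive functionals on `X` (i.e. those induced by elements
of the predual `P`) is weak* dense in the cone `X^♯⁺` of all positive functionals on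
`X`, in the topology `σ(X^♯, X)`. -/
theorem operatorSystem_normalPositive_weakStarDense_in_positive
    {P A : Type*} [NormedAddCommGroup P] [NormedSpace ℂ P]
    [NormedRing A] [StarRing A] [CStarRing A] [NormedAlgebra ℂ A] [StarModule ℂ A]
    [CompleteSpace A] [PartialOrder A] [StarOrderedRing A]
    (j : StrongDual ℂ P →ₗᵢ[ℂ] A)
    (e : StrongDual ℂ P) (he : j e = 1)
    (σ : StrongDual ℂ P → StrongDual ℂ P)
    (hσ : ∀ f, j (σ f) = star (j f))
    (hσcont : Continuous (X := WeakDual ℂ P) (Y := WeakDual ℂ P) σ)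
    (hposclosed : IsClosed {φ : WeakDual ℂ P | 0 ≤ j (WeakDual.toStrongDual φ)}) :
    {ρ : WeakDual ℂ (StrongDual ℂ P) | ∀ f : StrongDual ℂ P, 0 ≤ j f → 0 ≤ ρ f}
      ⊆ closure {ρ : WeakDual ℂ (StrongDual ℂ P) |
          ∃ p : P, (∀ g : StrongDual ℂ P, 0 ≤ j g → 0 ≤ g p) ∧ ∀ f : StrongDual ℂ P, ρ f = f p} := by
  let _ : CStarAlgebra A := {}
  intro ρ₀ hρ₀
  by_contra hρ₀_notMem
  obtain ⟨f, hρ₀f, hf⟩ := WeakDual.exists_re_neg_of_notMem_closure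
    (normalPositiveCone j.toLinearMap) (normalPositiveCone_pointed _) hρ₀_notMem
  have hσ_fix : ∀ g, IsSelfAdjoint (j g) → σ g = g := fun g hg =>
    j.injective (by rw [hσ, hg.star_eq])
  have hre : ∀ ρ : WeakDual ℂ (StrongDual ℂ P), (∀ g, 0 ≤ j g → 0 ≤ ρ g) →
      ρ (f + σ f) = (2 * (ρ f).re : ℝ) := fun ρ hρ =>
    apply_add_eq_two_mul_re (j := j.toLinearMap) he hρ (hσ f)
  have hpos : 0 ≤ j (f + σ f) := by
    refine WeakDual.mem_of_forall_re_apply_nonneg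
      (K := positiveCone (X := WeakDual ℂ P) j.toLinearMap) (positiveCone_pointed _) hposclosed
      ⟨starLinearOfInjective j.toLinearMap j.injective σ hσ, hσcont⟩
      (fun g hg => hσ_fix g (IsSelfAdjoint.of_nonneg hg))
      (hσ_fix _ (isSelfAdjoint_add_of_eq_star (j := j.toLinearMap) (hσ f))) fun p hp => ?_
    have hp_re := congrArg Complex.re (hre (inclusionInDoubleDual ℂ P p) hp)
    rw [Complex.ofReal_re] at hp_re
    exact (mul_nonneg zero_le_two (hf _ ⟨p, hp, fun _ => rfl⟩)).trans_eq hp_re.symm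
  have := hre ρ₀ hρ₀ ▸ hρ₀ _ hpos
  rw [RCLike.re_to_complex] at hρ₀f
  linarith [Complex.zero_le_real.1 this]
end

section
/- Let X be a unital operator space (a subspace of a unital C*-algebra containing the identity) and x ∈ X with ‖x‖ ≤ 1. Then x is dissipative (i.e., Re ρ(x) ≤ 0 for every state ρ of the containing C*-algebra, equivalently the numerical range of x lies in the closed left half-plane) if and only if ‖1 + t·x‖² ≤ 1 + t² for all t ∈ [0,1]. -/
/-!
Write `h = x + x*`. By the C*-identity, `‖1 + t x‖² = ‖1 + t h + t² x* x‖ ≤ ‖1 + t h‖ + t²`.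
States are hermitian (a unital contractive functional is real on selfadjoint elements, since
`|ρ(b) + i s|² ≤ ‖b + i s‖² = ‖b² + s²‖` for all real `s`), so `ρ(h) = 2 Re ρ(x)`; and every
point of the spectrum of the normal element `h` is `ρ(h)` for some state `ρ` (a character of
`C*(h)` extended by Hahn–Banach). Hence dissipativity puts `σ(h)` in `[-2, 0]`, so
`‖1 + t h‖ ≤ 1` for `t ∈ [0, 1]`. Conversely, if `Re ρ(x) = r > 0` then
`(1 + t r)² ≤ |ρ(1 + t x)|² ≤ 1 + t²` forces `2 r ≤ t` for all small `t > 0`.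
-/

open Complex ComplexConjugate ComplexStarModule Set

section CStarRing

variable {A : Type*} [NormedRing A] [StarRing A] [CStarRing A] [NormedAlgebra ℂ A]
  [StarModule ℂ A]

lemma norm_add_algebraMap_ofReal_mul_I_sq_le {b : A} (hb : IsSelfAdjoint b) (s : ℝ) :
    ‖b + algebraMap ℂ A (s * I)‖ ^ 2 ≤ ‖b‖ ^ 2 + s ^ 2 := by
  obtain _ | _ := subsingleton_or_nontrivial A
  · rw [Subsingleton.elim (b + _) b]
    exact le_add_of_nonneg_right (sq_nonneg s)
  set c : A := algebraMap ℂ A (s * I)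
  have hc : star c = -c := by
    rw [← algebraMap_star_comm, ← map_neg]; congr 1; simp
  have hcc : c * c = -algebraMap ℂ A ((s : ℂ) ^ 2) := by
    rw [← map_mul, ← map_neg]; congr 1; ring_nf; simp
  have hexpand : star (b + c) * (b + c) = b * b + algebraMap ℂ A ((s : ℂ) ^ 2) := by
    rw [star_add, hb.star_eq, hc, ← neg_neg (algebraMap ℂ A _), ← hcc]
    have : c * b = b * c := Algebra.commutes _ b
    noncomm_ring [this]
  calc ‖b + c‖ ^ 2 = ‖b * b + algebraMap ℂ A ((s : ℂ) ^ 2)‖ := by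
        rw [sq, ← CStarRing.norm_star_mul_self, hexpand]
    _ ≤ ‖b‖ ^ 2 + s ^ 2 := by
        refine (norm_add_le _ _).trans (add_le_add ((norm_mul_le b b).trans_eq (sq _).symm) ?_)
        rw [norm_algebraMap', ← ofReal_pow, norm_real, Real.norm_of_nonneg (sq_nonneg s)]

lemma im_apply_eq_zero_of_isSelfAdjoint {ρ : A →L[ℂ] ℂ} (h1 : ρ 1 = 1) (hρ : ‖ρ‖ ≤ 1) {b : A}
    (hb : IsSelfAdjoint b) : (ρ b).im = 0 := by
  have key (s : ℝ) : (ρ b).re ^ 2 + ((ρ b).im + s) ^ 2 ≤ ‖b‖ ^ 2 + s ^ 2 := by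
    have hρb : ρ (b + algebraMap ℂ A (s * I)) = ρ b + s * I := by
      rw [map_add, Algebra.algebraMap_eq_smul_one, map_smul, h1, smul_eq_mul, mul_one]
    calc (ρ b).re ^ 2 + ((ρ b).im + s) ^ 2 = ‖ρ (b + algebraMap ℂ A (s * I))‖ ^ 2 := by
          rw [hρb, Complex.sq_norm, normSq_apply]
          simp only [add_re, add_im, mul_re, mul_im, ofReal_re, ofReal_im, I_re, I_im]
          ring
      _ ≤ ‖b + algebraMap ℂ A (s * I)‖ ^ 2 := by
          gcongr; exact ρ.le_of_opNorm_le hρ _ |>.trans_eq (one_mul _)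
      _ ≤ ‖b‖ ^ 2 + s ^ 2 := norm_add_algebraMap_ofReal_mul_I_sq_le hb s
  by_contra hv
  have h2vs : 2 * (ρ b).im * ((‖b‖ ^ 2 + 1) / (2 * (ρ b).im)) = ‖b‖ ^ 2 + 1 := by
    field_simp
  nlinarith [key ((‖b‖ ^ 2 + 1) / (2 * (ρ b).im)), sq_nonneg (ρ b).re]

lemma apply_star_eq_conj {ρ : A →L[ℂ] ℂ} (h1 : ρ 1 = 1) (hρ : ‖ρ‖ ≤ 1) (y : A) :
    ρ (star y) = conj (ρ y) := by
  have hre := im_apply_eq_zero_of_isSelfAdjoint h1 hρ (ℜ y).2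
  have him := im_apply_eq_zero_of_isSelfAdjoint h1 hρ (ℑ y).2
  rw [← realPart_add_I_smul_imaginaryPart y]
  apply Complex.ext <;> simp [hre, him]

lemma norm_one_add_smul_sq_le (x : A) (t : ℝ) :
    ‖1 + (t : ℂ) • x‖ ^ 2 ≤ ‖1 + (t : ℂ) • (x + star x)‖ + t ^ 2 * ‖x‖ ^ 2 := by
  have hexpand : star (1 + (t : ℂ) • x) * (1 + (t : ℂ) • x)
      = (1 + (t : ℂ) • (x + star x)) + ((t : ℂ) ^ 2) • (star x * x) := by
    simp only [star_add, star_one, star_smul, RCLike.star_def, conj_ofReal, add_mul, mul_add,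
      one_mul, mul_one, smul_mul_smul_comm, smul_add]
    module
  calc ‖1 + (t : ℂ) • x‖ ^ 2 = ‖(1 + (t : ℂ) • (x + star x)) + ((t : ℂ) ^ 2) • (star x * x)‖ := by
        rw [sq, ← CStarRing.norm_star_mul_self, hexpand]
    _ ≤ ‖1 + (t : ℂ) • (x + star x)‖ + t ^ 2 * ‖x‖ ^ 2 := by
        refine (norm_add_le _ _).trans ?_
        gcongr
        rw [norm_smul, norm_pow, norm_real, Real.norm_eq_abs, sq_abs, CStarRing.norm_star_mul_self,
          sq ‖x‖]

end CStarRing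

section CStarAlgebra

variable {A : Type*} [CStarAlgebra A]

lemma exists_state_apply_eq_of_mem_spectrum {a : A} [IsStarNormal a] {z : ℂ}
    (hz : z ∈ spectrum ℂ a) : ∃ ρ : A →L[ℂ] ℂ, ρ 1 = 1 ∧ ‖ρ‖ = 1 ∧ ρ a = z := by
  obtain _ | _ := subsingleton_or_nontrivial A
  · simp [spectrum.of_subsingleton] at hz
  obtain ⟨φ, hφ⟩ := (StarAlgebra.elemental.bijective_characterSpaceToSpectrum a).2 ⟨z, hz⟩
  let B := StarAlgebra.elemental ℂ a
  let f : StrongDual ℂ (Subalgebra.toSubmodule B.toSubalgebra) := WeakDual.CharacterSpace.toCLM φ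
  have hf : ‖f‖ ≤ 1 :=
    (WeakDual.CharacterSpace.norm_le_norm_one φ).trans_eq CStarRing.norm_one
  obtain ⟨ρ, hρf, hρ⟩ := exists_extension_norm_eq _ f
  have h1 : ρ 1 = 1 := (hρf ⟨1, one_mem B⟩).trans (map_one φ)
  refine ⟨ρ, h1, ?_, (hρf ⟨a, StarAlgebra.elemental.self_mem ℂ a⟩).trans (congrArg Subtype.val hφ)⟩
  exact le_antisymm (hρ ▸ hf) (by simpa [h1] using ρ.le_opNorm 1)

lemma nonpos_of_mem_spectrum_add_star {x : A}
    (hx : ∀ ρ : A →L[ℂ] ℂ, ρ 1 = 1 → ‖ρ‖ = 1 → (ρ x).re ≤ 0) {r : ℝ}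
    (hr : r ∈ spectrum ℝ (x + star x)) : r ≤ 0 := by
  have := (IsSelfAdjoint.add_star_self x).isStarNormal
  obtain ⟨ρ, h1, hρ, hρr⟩ :=
    exists_state_apply_eq_of_mem_spectrum ((spectrum.algebraMap_mem_iff ℂ).2 hr)
  have : r = 2 * (ρ x).re := by
    simpa [apply_star_eq_conj h1 hρ.le, add_conj] using (congrArg re hρr).symm
  linarith [hx ρ h1 hρ]

lemma norm_one_add_smul_le_one {h : A} (hh : IsSelfAdjoint h) (hspec : ∀ r ∈ spectrum ℝ h, r ≤ 0)
    (hnorm : ‖h‖ ≤ 2) {t : ℝ} (ht : t ∈ Icc (0 : ℝ) 1) : ‖1 + t • h‖ ≤ 1 := by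
  nontriviality A
  rw [← cfc_const_mul_id t h, ← map_one (algebraMap ℝ A), ← cfc_const_add 1 (t * ·) h]
  refine norm_cfc_le zero_le_one fun r hr => ?_
  have hr2 : -2 ≤ r := by
    have := spectrum.norm_le_norm_of_mem hr
    rw [Real.norm_eq_abs] at this
    linarith [neg_abs_le r]
  rw [Real.norm_eq_abs, abs_le]
  constructor <;> nlinarith [hspec r hr, ht.1, ht.2]

end CStarAlgebra

lemma re_apply_nonpos_of_norm_one_add_smul_sq_le {A : Type*} [NormedRing A] [NormedAlgebra ℂ A]
    {ρ : A →L[ℂ] ℂ} (h1 : ρ 1 = 1) (hρ : ‖ρ‖ ≤ 1) {x : A}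
    (hx : ∀ t ∈ Icc (0 : ℝ) 1, ‖1 + (t : ℂ) • x‖ ^ 2 ≤ 1 + t ^ 2) : (ρ x).re ≤ 0 := by
  have key (t : ℝ) (ht : t ∈ Ioc (0 : ℝ) 1) : 2 * (ρ x).re ≤ t := by
    have hsq : (1 + t * (ρ x).re) ^ 2 ≤ 1 + t ^ 2 :=
      calc (1 + t * (ρ x).re) ^ 2 = (ρ (1 + (t : ℂ) • x)).re ^ 2 := by simp [h1]
        _ ≤ ‖ρ (1 + (t : ℂ) • x)‖ ^ 2 := by
          rw [← sq_abs]; gcongr; exact abs_re_le_norm _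
        _ ≤ ‖1 + (t : ℂ) • x‖ ^ 2 := by
          gcongr; exact ρ.le_of_opNorm_le hρ _ |>.trans_eq (one_mul _)
        _ ≤ 1 + t ^ 2 := hx t (Ioc_subset_Icc_self ht)
    nlinarith [ht.1, sq_nonneg (t * (ρ x).re)]
  by_contra! hpos
  linarith [key (min 1 (ρ x).re) ⟨lt_min one_pos hpos, min_le_left _ _⟩, min_le_right 1 (ρ x).re]

theorem dissipative_iff_norm_sq_le_general
    {A : Type*} [NormedRing A] [StarRing A] [CStarRing A] [NormedAlgebra ℂ A]
    [StarModule ℂ A] [CompleteSpace A]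
    (x : A) (hxnorm : ‖x‖ ≤ 1) :
    (∀ ρ : A →L[ℂ] ℂ, ρ 1 = 1 → ‖ρ‖ = 1 → (ρ x).re ≤ 0) ↔
      ∀ t : ℝ, t ∈ Set.Icc (0 : ℝ) 1 → ‖1 + (t : ℂ) • x‖ ^ 2 ≤ 1 + t ^ 2 := by
  let _ : CStarAlgebra A := { ‹NormedRing A›, ‹StarRing A›, ‹CStarRing A›, ‹NormedAlgebra ℂ A›,
    ‹StarModule ℂ A›, ‹CompleteSpace A› with }
  constructor
  · intro hdiss t ht
    have hsum : ‖x + star x‖ ≤ 2 := (norm_add_le _ _).trans (by rw [norm_star]; linarith)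
    have hre : ‖1 + (t : ℂ) • (x + star x)‖ ≤ 1 := by
      rw [coe_smul]
      exact norm_one_add_smul_le_one (.add_star_self x)
        (fun r hr => nonpos_of_mem_spectrum_add_star hdiss hr) hsum ht
    have hsq : t ^ 2 * ‖x‖ ^ 2 ≤ t ^ 2 :=
      mul_le_of_le_one_right (sq_nonneg t) (pow_le_one₀ (norm_nonneg x) hxnorm)
    linarith [norm_one_add_smul_sq_le x t]
  · exact fun h ρ h1 hρ => re_apply_nonpos_of_norm_one_add_smul_sq_le h1 hρ.le h

/-- Let `X` be a unital operator space (a closed subspace of a unital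
C*-algebra `A` containing the identity) and `x ∈ X` with `‖x‖ ≤ 1`.  Then `x` is
dissipative (i.e. `Re ρ(x) ≤ 0` for every state `ρ` of `A`, equivalently the
numerical range of `x` lies in the closed left half-plane) if and only if
`‖1 + t·x‖² ≤ 1 + t²` for all `t ∈ [0,1]`. -/
theorem dissipative_iff_norm_sq_le
    {A : Type*} [NormedRing A] [StarRing A] [CStarRing A] [NormedAlgebra ℂ A]
    [StarModule ℂ A] [CompleteSpace A]
    (X : Submodule ℂ A) (hX1 : (1 : A) ∈ X) (hXc : IsClosed (X : Set A))
    (x : A) (hx : x ∈ X) (hxnorm : ‖x‖ ≤ 1) :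
    (∀ ρ : A →L[ℂ] ℂ, ρ 1 = 1 → ‖ρ‖ = 1 → (ρ x).re ≤ 0) ↔
      ∀ t : ℝ, t ∈ Set.Icc (0 : ℝ) 1 → ‖1 + (t : ℂ) • x‖ ^ 2 ≤ 1 + t ^ 2 :=
  dissipative_iff_norm_sq_le_general x hxnorm
end

section
/- Let X be a unital operator space and let D_X be its cone of dissipative elements. If ρ is a bounded linear functional on X such that Re ρ(x) ≤ 0 for all x ∈ D_X, then ρ(1) ≥ 0, ρ(1) ∈ ℝ, and |ρ(x)| ≤ ‖x‖·ρ(1) for all x ∈ X; in particular, ρ is a nonnegative multiple of a state. -/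
/-! Testing `±i·1` and `-1` against `ρ` shows `ρ 1 ≥ 0`. For `t ≥ ‖x‖` the element `x - t·1`
is dissipative, since every state has norm one; hence `Re ρ x ≤ ‖x‖ ρ 1`, and rotating `x` by a
unimodular scalar upgrades this to `|ρ x| ≤ ‖x‖ ρ 1`. So `ρ` attains its norm at `1`, and
`ρ / ρ 1` is a state unless `ρ = 0`. -/

open scoped ComplexOrder

lemma CStarRing.norm_one_le_one {A : Type*} [NormedRing A] [StarRing A] [CStarRing A] :
    ‖(1 : A)‖ ≤ 1 := by
  rcases subsingleton_or_nontrivial A with hA | hA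
  · simp [Subsingleton.elim (1 : A) 0]
  · exact CStarRing.norm_one.le

lemma Complex.nonneg_of_forall_re_mul_nonpos {z : ℂ} (h : ∀ c : ℂ, c.re ≤ 0 → (c * z).re ≤ 0) :
    0 ≤ z := by
  have h_re := h (-1) (by norm_num)
  have h_im_le := h Complex.I (by simp)
  have h_im_ge := h (-Complex.I) (by simp)
  simp only [neg_mul, one_mul, Complex.neg_re, Complex.I_mul_re] at h_re h_im_le h_im_ge
  exact Complex.nonneg_iff.2 ⟨by linarith, by linarith⟩

lemma LinearMap.norm_apply_le_of_forall_re_apply_le {E : Type*} [SeminormedAddCommGroup E]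
    [NormedSpace ℂ E] (f : E →ₗ[ℂ] ℂ) {r : ℝ} (h : ∀ x, (f x).re ≤ ‖x‖ * r) (x : E) :
    ‖f x‖ ≤ ‖x‖ * r := by
  obtain ⟨c, hc, hcx⟩ := Complex.exists_norm_eq_mul_self (f x)
  calc ‖f x‖ = (f (c • x)).re := by rw [map_smul, smul_eq_mul, ← hcx, Complex.ofReal_re]
    _ ≤ ‖c • x‖ * r := h _
    _ = ‖x‖ * r := by rw [norm_smul, hc, one_mul]

lemma ContinuousLinearMap.eq_zero_or_eq_smul_of_norm_le_norm_apply {E : Type*}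
    [NormedAddCommGroup E] [NormedSpace ℂ E] {e : E} (he : ‖e‖ ≤ 1) (ρ : E →L[ℂ] ℂ)
    (hρ : ‖ρ‖ ≤ ‖ρ e‖) : ρ = 0 ∨ ∃ φ : E →L[ℂ] ℂ, φ e = 1 ∧ ‖φ‖ = 1 ∧ ρ = ρ e • φ := by
  by_cases hρe : ρ e = 0
  · left
    rw [hρe, norm_zero] at hρ
    exact ρ.opNorm_zero_iff.1 (le_antisymm hρ (norm_nonneg ρ))
  right
  refine ⟨(ρ e)⁻¹ • ρ, inv_mul_cancel₀ hρe, le_antisymm ?_ ?_, by rw [smul_smul,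
    mul_inv_cancel₀ hρe, one_smul]⟩
  · rw [norm_smul, norm_inv]
    exact inv_mul_le_one_of_le₀ hρ (norm_nonneg _)
  · calc 1 = ‖((ρ e)⁻¹ • ρ) e‖ := by simp [hρe]
      _ ≤ ‖(ρ e)⁻¹ • ρ‖ * ‖e‖ := le_opNorm _ _
      _ ≤ ‖(ρ e)⁻¹ • ρ‖ := mul_le_of_le_one_right (norm_nonneg _) he

section Dissipative

variable {A : Type*} [NormedRing A] [NormedAlgebra ℂ A]

def IsDissipative (a : A) : Prop :=
  ∀ σ : A →L[ℂ] ℂ, σ 1 = 1 → ‖σ‖ = 1 → (σ a).re ≤ 0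

lemma isDissipative_smul_one {c : ℂ} (hc : c.re ≤ 0) : IsDissipative (c • (1 : A)) := by
  intro σ hσ1 _
  simpa [hσ1] using hc

lemma isDissipative_sub_smul_one {x : A} {t : ℝ} (ht : ‖x‖ ≤ t) :
    IsDissipative (x - (t : ℂ) • (1 : A)) := by
  intro σ hσ1 hσ
  have hσx : (σ x).re ≤ t :=
    calc (σ x).re ≤ ‖σ x‖ := Complex.re_le_norm _
      _ ≤ ‖σ‖ * ‖x‖ := σ.le_opNorm x
      _ ≤ t := by rw [hσ, one_mul]; exact ht
  simpa [hσ1] using hσx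

variable {X : Submodule ℂ A} (hX1 : (1 : A) ∈ X) {ρ : X →ₗ[ℂ] ℂ}

lemma apply_one_nonneg_of_isDissipative (hρ : ∀ x : X, IsDissipative (x : A) → (ρ x).re ≤ 0) :
    0 ≤ ρ ⟨1, hX1⟩ :=
  Complex.nonneg_of_forall_re_mul_nonpos fun c hc => by
    simpa only [map_smul, smul_eq_mul] using hρ (c • ⟨1, hX1⟩) (isDissipative_smul_one hc)

lemma re_apply_le_of_isDissipative (hρ : ∀ x : X, IsDissipative (x : A) → (ρ x).re ≤ 0)
    (x : X) : (ρ x).re ≤ ‖x‖ * (ρ ⟨1, hX1⟩).re := by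
  have := hρ (x - (‖x‖ : ℂ) • ⟨1, hX1⟩) (isDissipative_sub_smul_one le_rfl)
  simp only [map_sub, map_smul, smul_eq_mul, Complex.sub_re, Complex.re_ofReal_mul] at this
  linarith

end Dissipative

theorem functional_nonneg_on_negDissipative_is_multiple_of_state_general
    {A : Type*} [NormedRing A] [StarRing A] [CStarRing A] [NormedAlgebra ℂ A]
    (X : Submodule ℂ A) (hX1 : (1 : A) ∈ X)
    (ρ : X →L[ℂ] ℂ)
    (hρ : ∀ x : X, (∀ σ : A →L[ℂ] ℂ, σ 1 = 1 → ‖σ‖ = 1 → (σ (x : A)).re ≤ 0) →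
      (ρ x).re ≤ 0) :
    (ρ ⟨1, hX1⟩).im = 0 ∧ 0 ≤ (ρ ⟨1, hX1⟩).re ∧
      (∀ x : X, ‖ρ x‖ ≤ ‖(x : A)‖ * (ρ ⟨1, hX1⟩).re) ∧
      (ρ = 0 ∨ ∃ φ : X →L[ℂ] ℂ, φ ⟨1, hX1⟩ = 1 ∧ ‖φ‖ = 1 ∧ ρ = (ρ ⟨1, hX1⟩) • φ) := by
  obtain ⟨hre, him⟩ := Complex.nonneg_iff.1 (apply_one_nonneg_of_isDissipative hX1 hρ)
  have hbound : ∀ x : X, ‖ρ x‖ ≤ ‖x‖ * (ρ ⟨1, hX1⟩).re :=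
    LinearMap.norm_apply_le_of_forall_re_apply_le (ρ : X →ₗ[ℂ] ℂ)
      (re_apply_le_of_isDissipative hX1 hρ)
  have hnorm : ‖ρ‖ ≤ ‖ρ ⟨1, hX1⟩‖ := ρ.opNorm_le_bound (norm_nonneg _) fun x =>
    (hbound x).trans <| by rw [mul_comm]; gcongr; exact Complex.re_le_norm _
  exact ⟨him.symm, hre, hbound,
    ρ.eq_zero_or_eq_smul_of_norm_le_norm_apply CStarRing.norm_one_le_one hnorm⟩

/-- Let `X` be a unital operator space (a closed unital subspace of a
unital C*-algebra `A`) and let `D_X` be its cone of dissipative elements (those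
`x ∈ X` with `Re σ(x) ≤ 0` for every state `σ` of `A`).  If `ρ` is a bounded linear
functional on `X` such that `Re ρ(x) ≤ 0` for all `x ∈ D_X`, then `ρ(1) ≥ 0`,
`ρ(1) ∈ ℝ`, and `|ρ(x)| ≤ ‖x‖·ρ(1)` for all `x ∈ X`; in particular `ρ` is a
nonnegative multiple of a state. -/
theorem functional_nonneg_on_negDissipative_is_multiple_of_state
    {A : Type*} [NormedRing A] [StarRing A] [CStarRing A] [NormedAlgebra ℂ A]
    [StarModule ℂ A] [CompleteSpace A]
    (X : Submodule ℂ A) (hX1 : (1 : A) ∈ X) (hXc : IsClosed (X : Set A))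
    (ρ : X →L[ℂ] ℂ)
    (hρ : ∀ x : X, (∀ σ : A →L[ℂ] ℂ, σ 1 = 1 → ‖σ‖ = 1 → (σ (x : A)).re ≤ 0) →
      (ρ x).re ≤ 0) :
    (ρ ⟨1, hX1⟩).im = 0 ∧ 0 ≤ (ρ ⟨1, hX1⟩).re ∧
      (∀ x : X, ‖ρ x‖ ≤ ‖(x : A)‖ * (ρ ⟨1, hX1⟩).re) ∧
      (ρ = 0 ∨ ∃ φ : X →L[ℂ] ℂ, φ ⟨1, hX1⟩ = 1 ∧ ‖φ‖ = 1 ∧ ρ = (ρ ⟨1, hX1⟩) • φ) :=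
  functional_nonneg_on_negDissipative_is_multiple_of_state_general X hX1 ρ hρ
end
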